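/- Let E be a uniformly convex real Banach space with a partial order ≤ induced by a closed convex cone P, and let T : P → P be a monotone nonexpansive mapping that has at least one fixed point. If the norm is monotonic (‖x‖ ≤ ‖y‖ whenever 0 ≤ x ≤ y), then for every x ∈ P with x ≤ Tx, the sequence Tⁿx converges strongly (in norm) to a fixed point z of T. -/

import Mathlib

/-!
Write `y ≥ x` for `y - x ∈ P`. For `x ≤ T x` the iterates `xₙ = Tⁿ x` increase, and they are
bounded: `Tⁿ 0 ≤ p` for a fixed point `p`, so `‖Tⁿ 0‖ ≤ ‖p‖`, while `‖Tⁿ x - Tⁿ 0‖ ≤ ‖x‖`.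
With `uₙ = xₙ - x ≥ 0`, monotonicity of the norm gives `2 ‖uₙ‖ ≤ ‖uₙ + uₘ‖` for `n ≤ m`, so
the norms `‖uₙ‖` increase to some `L`; uniform convexity then forces `‖uₘ - uₙ‖` to be small once
`‖uₙ‖` is close to `L`, and the sequence is Cauchy. Its limit `z` dominates every `xₙ`, hence
`‖xₙ₊₁ - T z‖ ≤ ‖xₙ - z‖ → 0` and `T z = z`.
-/

open Filter Topology

/-- A closed convex cone in a real normed space: nonempty, closed, not `{0}`,
pointed (`P ∩ (−P) = {0}`), and closed under nonnegative linear combinations. -/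
def IsClosedConvexCone {E : Type*} [NormedAddCommGroup E] [NormedSpace ℝ E]
    (P : Set E) : Prop :=
  P.Nonempty ∧ IsClosed P ∧ P ≠ {0} ∧ P ∩ (-P) = {0} ∧
    ∀ x ∈ P, ∀ y ∈ P, ∀ a b : ℝ, 0 ≤ a → 0 ≤ b → a • x + b • y ∈ P

/-- Weak convergence of a sequence: `f (x n) → f l` for every continuous
linear functional `f`. -/
def WeakConv {E : Type*} [NormedAddCommGroup E] [NormedSpace ℝ E]
    (x : ℕ → E) (l : E) : Prop :=
  ∀ f : E →L[ℝ] ℝ, Tendsto (fun n => f (x n)) atTop (𝓝 (f l))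

/-- `T` is monotone (w.r.t. the order `x ≤ y ↔ y - x ∈ P`) and α-nonexpansive
on `K`. -/
def MonotoneAlphaNonexpansive {E : Type*} [NormedAddCommGroup E] [NormedSpace ℝ E]
    (P K : Set E) (T : E → E) (α : ℝ) : Prop :=
  (∀ x ∈ K, ∀ y ∈ K, y - x ∈ P → T y - T x ∈ P) ∧
    ∀ x ∈ K, ∀ y ∈ K, y - x ∈ P →
      ‖T x - T y‖ ^ 2 ≤ α * ‖T x - y‖ ^ 2 + α * ‖T y - x‖ ^ 2
        + (1 - 2 * α) * ‖x - y‖ ^ 2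

section UniformConvex

variable {E : Type*} [NormedAddCommGroup E] [NormedSpace ℝ E] [UniformConvexSpace E]

theorem cauchySeq_of_two_mul_norm_le_norm_add {u : ℕ → E}
    (hbdd : BddAbove (Set.range fun n => ‖u n‖))
    (hmid : ∀ n m, n ≤ m → 2 * ‖u n‖ ≤ ‖u n + u m‖) : CauchySeq u := by
  rw [Metric.cauchySeq_iff']
  intro ε hε
  set L := ⨆ n, ‖u n‖
  have hle : ∀ n, ‖u n‖ ≤ L := le_ciSup hbdd
  obtain ⟨δ, hδ, huc⟩ := exists_forall_closed_ball_dist_add_le_two_mul_sub E hε L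
  obtain ⟨N, hN⟩ : ∃ N, L - δ / 2 < ‖u N‖ := exists_lt_of_lt_ciSup (by linarith)
  refine ⟨N, fun m hm => ?_⟩
  rw [dist_eq_norm, norm_sub_rev]
  by_contra! hfar
  have := huc (hle N) (hle m) hfar
  linarith [hmid N m hm]

end UniformConvex

namespace IsClosedConvexCone

variable {E : Type*} [NormedAddCommGroup E] [NormedSpace ℝ E] {P : Set E}

theorem zero_mem (hP : IsClosedConvexCone P) : (0 : E) ∈ P :=
  (hP.2.2.2.1.symm ▸ Set.mem_singleton 0 : (0 : E) ∈ P ∩ -P).1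

theorem add_mem (hP : IsClosedConvexCone P) {x y : E} (hx : x ∈ P) (hy : y ∈ P) :
    x + y ∈ P := by
  simpa using hP.2.2.2.2 x hx y hy 1 1 zero_le_one zero_le_one

theorem sub_mem_trans (hP : IsClosedConvexCone P) {x y z : E} (hxy : y - x ∈ P)
    (hyz : z - y ∈ P) : z - x ∈ P := by
  simpa using hP.add_mem hyz hxy

theorem sub_mem_of_tendsto (hP : IsClosedConvexCone P) {u : ℕ → E} {y z : E}
    (hu : Tendsto u atTop (𝓝 z)) (hy : ∀ᶠ n in atTop, u n - y ∈ P) : z - y ∈ P :=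
  hP.2.1.mem_of_tendsto (hu.sub_const y) hy

end IsClosedConvexCone

section Iterate

theorem iterate_sub_mem {E : Type*} [AddGroup E] {P : Set E} {T : E → E}
    (hTP : ∀ x ∈ P, T x ∈ P) (hmono : ∀ x ∈ P, ∀ y ∈ P, y - x ∈ P → T y - T x ∈ P) (n : ℕ)
    {x y : E} (hx : x ∈ P) (hy : y ∈ P) (hxy : y - x ∈ P) : T^[n] y - T^[n] x ∈ P := by
  induction n generalizing x y with
  | zero => exact hxy
  | succ n ih =>
    simp only [Function.iterate_succ_apply]
    exact ih (hTP x hx) (hTP y hy) (hmono x hx y hy hxy)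

variable {E : Type*} [NormedAddCommGroup E] {P : Set E} {T : E → E}

theorem norm_iterate_sub_iterate_le (hTP : ∀ x ∈ P, T x ∈ P)
    (hmono : ∀ x ∈ P, ∀ y ∈ P, y - x ∈ P → T y - T x ∈ P)
    (hne : ∀ x ∈ P, ∀ y ∈ P, y - x ∈ P → ‖T x - T y‖ ≤ ‖x - y‖) (n : ℕ) {x y : E}
    (hx : x ∈ P) (hy : y ∈ P) (hxy : y - x ∈ P) : ‖T^[n] x - T^[n] y‖ ≤ ‖x - y‖ := by
  induction n generalizing x y with
  | zero => exact le_rfl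
  | succ n ih =>
    simp only [Function.iterate_succ_apply]
    exact (ih (hTP x hx) (hTP y hy) (hmono x hx y hy hxy)).trans (hne x hx y hy hxy)

theorem map_eq_of_tendsto_iterate (hTP : ∀ x ∈ P, T x ∈ P)
    (hne : ∀ x ∈ P, ∀ y ∈ P, y - x ∈ P → ‖T x - T y‖ ≤ ‖x - y‖) {x z : E} (hx : x ∈ P)
    (hz : z ∈ P) (hle : ∀ n, z - T^[n] x ∈ P)
    (hlim : Tendsto (fun n => T^[n] x) atTop (𝓝 z)) : T z = z := by
  have hxn : ∀ n, T^[n] x ∈ P := fun n =>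
    Set.MapsTo.iterate (fun y hy => hTP y hy) n hx
  have hTlim : Tendsto (fun n => T^[n + 1] x) atTop (𝓝 (T z)) := by
    refine tendsto_iff_norm_sub_tendsto_zero.2 <| squeeze_zero (fun _ => norm_nonneg _)
      (fun n => ?_) (tendsto_iff_norm_sub_tendsto_zero.1 hlim)
    rw [Function.iterate_succ_apply']
    exact hne _ (hxn n) z hz (hle n)
  exact tendsto_nhds_unique hTlim ((tendsto_add_atTop_iff_nat 1).2 hlim)

variable [NormedSpace ℝ E]

theorem iterate_sub_iterate_mem (hP : IsClosedConvexCone P) (hTP : ∀ x ∈ P, T x ∈ P)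
    (hmono : ∀ x ∈ P, ∀ y ∈ P, y - x ∈ P → T y - T x ∈ P) {x : E} (hx : x ∈ P)
    (hxT : T x - x ∈ P) {n m : ℕ} (hnm : n ≤ m) : T^[m] x - T^[n] x ∈ P := by
  induction m, hnm using Nat.le_induction with
  | base => simpa using hP.zero_mem
  | succ m _ ih =>
    refine hP.sub_mem_trans ih ?_
    rw [Function.iterate_succ_apply]
    exact iterate_sub_mem hTP hmono m hx (hTP x hx) hxT

theorem norm_iterate_le (hP : IsClosedConvexCone P) (hTP : ∀ x ∈ P, T x ∈ P)
    (hmono : ∀ x ∈ P, ∀ y ∈ P, y - x ∈ P → T y - T x ∈ P)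
    (hne : ∀ x ∈ P, ∀ y ∈ P, y - x ∈ P → ‖T x - T y‖ ≤ ‖x - y‖)
    (hnorm : ∀ x y : E, x ∈ P → y - x ∈ P → ‖x‖ ≤ ‖y‖) {p : E} (hp : p ∈ P)
    (hTp : T p = p) (n : ℕ) {x : E} (hx : x ∈ P) : ‖T^[n] x‖ ≤ ‖x‖ + ‖p‖ := by
  have hfix : T^[n] p = p := Function.iterate_fixed hTp n
  have h0_le_p : T^[n] p - T^[n] 0 ∈ P :=
    iterate_sub_mem hTP hmono n hP.zero_mem hp (by simpa using hp)
  have hT0 : ‖T^[n] 0‖ ≤ ‖p‖ :=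
    hfix ▸ hnorm _ _ (Set.MapsTo.iterate (fun y hy => hTP y hy) n hP.zero_mem) h0_le_p
  have hTx : ‖T^[n] x - T^[n] 0‖ ≤ ‖x‖ := by
    simpa [norm_sub_rev] using
      norm_iterate_sub_iterate_le hTP hmono hne n hP.zero_mem hx (by simpa using hx)
  calc ‖T^[n] x‖ ≤ ‖T^[n] x - T^[n] 0‖ + ‖T^[n] 0‖ := norm_le_norm_sub_add _ _
    _ ≤ ‖x‖ + ‖p‖ := add_le_add hTx hT0

end Iterate

/-- If a monotone nonexpansive self-map of the cone `P` has a fixed point and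
the norm is monotonic, then for every `x ∈ P` with `x ≤ T x` the Picard
iterates of `x` converge strongly to a fixed point of `T`. -/
theorem picard_strong_convergence_monotone_nonexpansive
    {E : Type*} [NormedAddCommGroup E] [NormedSpace ℝ E]
    [UniformConvexSpace E] [CompleteSpace E]
    (P : Set E) (hP : IsClosedConvexCone P)
    (T : E → E) (hTP : ∀ x ∈ P, T x ∈ P)
    (hmono : ∀ x ∈ P, ∀ y ∈ P, y - x ∈ P → T y - T x ∈ P)
    (hne : ∀ x ∈ P, ∀ y ∈ P, y - x ∈ P → ‖T x - T y‖ ≤ ‖x - y‖)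
    (hfix : ∃ p ∈ P, T p = p)
    (hnorm : ∀ x y : E, x ∈ P → y - x ∈ P → ‖x‖ ≤ ‖y‖) :
    ∀ x ∈ P, T x - x ∈ P →
      ∃ z ∈ P, T z = z ∧ Tendsto (fun n => T^[n] x) atTop (𝓝 z) := by
  intro x hx hxT
  obtain ⟨p, hp, hTp⟩ := hfix
  have hchain {n m : ℕ} (hnm : n ≤ m) : T^[m] x - T^[n] x ∈ P :=
    iterate_sub_iterate_mem hP hTP hmono hx hxT hnm
  have hcauchy : CauchySeq fun n => T^[n] x - x := by
    refine cauchySeq_of_two_mul_norm_le_norm_add ⟨‖x‖ + ‖p‖ + ‖x‖, ?_⟩ fun n m hnm => ?_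
    · rintro _ ⟨n, rfl⟩
      exact (norm_sub_le _ _).trans <| by
        gcongr; exact norm_iterate_le hP hTP hmono hne hnorm hp hTp n hx
    · have hn : T^[n] x - x ∈ P := by simpa using hchain n.zero_le
      have := hnorm _ (T^[n] x - x + (T^[m] x - x)) (hP.add_mem hn hn) (by simpa using hchain hnm)
      rwa [← two_smul ℝ, norm_smul, Real.norm_two] at this
  obtain ⟨z, hlim⟩ : ∃ z, Tendsto (fun n => T^[n] x) atTop (𝓝 z) := by
    obtain ⟨y, hy⟩ := cauchySeq_tendsto_of_complete hcauchy
    exact ⟨y + x, by simpa using hy.add_const x⟩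
  have hle (n : ℕ) : z - T^[n] x ∈ P :=
    hP.sub_mem_of_tendsto hlim (eventually_atTop.2 ⟨n, fun _ => hchain⟩)
  have hz : z ∈ P := by simpa using hP.add_mem (hle 0) hx
  exact ⟨z, hz, map_eq_of_tendsto_iterate hTP hne hx hz hle hlim, hlim⟩
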